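/- Let F be an n × n matrix whose entries are nonnegative integers such that every row sum and every column sum of F equals the same positive integer s. Then there exists a permutation σ of {1, …, n} with F(i, σ(i)) > 0 for all i; that is, at least one term of the determinant expansion of F is nonzero (Theorem D of König). -/

import Mathlib

/-!
Let `N(A)` be the set of columns meeting the support of the rows in `A`. The rows in `A`
carry total mass `#A * s`, all of it inside the columns `N(A)`, whose total mass is
`#N(A) * s`; hence `#A ≤ #N(A)`. This is Hall's condition, so Hall's marriage theorem gives
a system of distinct representatives, i.e. a permutation inside the support.
-/

open Finset

theorem Finset.exists_perm_forall_mem_of_card_le_card_biUnion {ι : Type*} [Fintype ι]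
    [DecidableEq ι] (t : ι → Finset ι) (hall : ∀ A : Finset ι, #A ≤ #(A.biUnion t)) :
    ∃ σ : Equiv.Perm ι, ∀ i, σ i ∈ t i := by
  obtain ⟨f, hf_inj, hf_mem⟩ := (all_card_le_biUnion_card_iff_exists_injective t).1 hall
  exact ⟨Equiv.ofBijective f (Finite.injective_iff_bijective.1 hf_inj), hf_mem⟩

namespace Matrix

variable {ι R : Type*} [Fintype ι]

def rowSupport [Zero R] [DecidableEq R] (F : Matrix ι ι R) (i : ι) : Finset ι :=
  {j | F i j ≠ 0}

theorem sum_rowSupport [AddCommMonoid R] [DecidableEq R] (F : Matrix ι ι R) (i : ι) :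
    ∑ j ∈ F.rowSupport i, F i j = ∑ j, F i j :=
  sum_filter_ne_zero _

variable [Semiring R] [LinearOrder R] [IsStrictOrderedRing R]

theorem card_le_card_biUnion_rowSupport [DecidableEq ι] [DecidableEq R] {F : Matrix ι ι R}
    (hF : ∀ i j, 0 ≤ F i j) {s : R} (hs : 0 < s) (hrow : ∀ i, ∑ j, F i j = s)
    (hcol : ∀ j, ∑ i, F i j = s) (A : Finset ι) :
    #A ≤ #(A.biUnion F.rowSupport) := by
  set N := A.biUnion F.rowSupport
  suffices (#A : R) * s ≤ #N * s by exact_mod_cast le_of_mul_le_mul_right this hs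
  calc (#A : R) * s = ∑ i ∈ A, ∑ j ∈ F.rowSupport i, F i j := by
        simp [sum_rowSupport, hrow]
    _ ≤ ∑ i ∈ A, ∑ j ∈ N, F i j :=
        sum_le_sum fun i hi =>
          sum_le_sum_of_subset_of_nonneg (subset_biUnion_of_mem _ hi) fun j _ _ => hF i j
    _ = ∑ j ∈ N, ∑ i ∈ A, F i j := sum_comm
    _ ≤ ∑ j ∈ N, ∑ i, F i j :=
        sum_le_sum fun j _ => sum_le_sum_of_subset_of_nonneg (subset_univ A) fun i _ _ => hF i j
    _ = #N * s := by simp [hcol]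

theorem exists_perm_forall_ne_zero_of_sum_eq {F : Matrix ι ι R} (hF : ∀ i j, 0 ≤ F i j)
    {s : R} (hs : 0 < s) (hrow : ∀ i, ∑ j, F i j = s) (hcol : ∀ j, ∑ i, F i j = s) :
    ∃ σ : Equiv.Perm ι, ∀ i, F i (σ i) ≠ 0 := by
  classical
  obtain ⟨σ, hσ⟩ := Finset.exists_perm_forall_mem_of_card_le_card_biUnion F.rowSupport
    (card_le_card_biUnion_rowSupport hF hs hrow hcol)
  exact ⟨σ, fun i => (mem_filter.1 (hσ i)).2⟩

end Matrix

theorem koenig_theorem_D {n : ℕ} (F : Matrix (Fin n) (Fin n) ℕ) (s : ℕ) (hs : 0 < s)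
    (hrow : ∀ i : Fin n, ∑ j, F i j = s) (hcol : ∀ j : Fin n, ∑ i, F i j = s) :
    ∃ σ : Equiv.Perm (Fin n), ∀ i : Fin n, 0 < F i (σ i) := by
  obtain ⟨σ, hσ⟩ :=
    Matrix.exists_perm_forall_ne_zero_of_sum_eq (fun i j => Nat.zero_le (F i j)) hs hrow hcol
  exact ⟨σ, fun i => Nat.pos_of_ne_zero (hσ i)⟩
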